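/- Assume R is complete and that E_S is T-torsion-free (Nil(E_S) = 0). Then an ideal L ⊆ R containing I is an E_S-ideal if and only if LS is an E_S-special ideal of S. -/

import Mathlib

/-!
Over a complete Noetherian local ring, Matlis duality makes `J ↦ Ann_E J` and `M ↦ Ann_R M`
inverse bijections between ideals of `R` and submodules of `E`, so `L = Ann_R M` forces
`M = Ann_E L`, and both sides of the equivalence say that `Ann_E L` is `T`-stable.

The heart of the duality is that every endomorphism `g` of `E` is multiplication by a scalar.
If `g` vanishes on `Ann_E 𝔪ⁿ` and `a₁, …, a_d` generate `𝔪ⁿ`, then on `Ann_E 𝔪ⁿ⁺¹` it vanishes on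
the kernel of `y ↦ (aᵢ y)ᵢ`, so by injectivity of `E` it factors through `E^d`; since each `aᵢ y`
lies in the one-dimensional socle, `g = ∑ cᵢ aᵢ` there. By induction `g` is a scalar `rₙ` on
each `Ann_E 𝔪ⁿ`, the `rₙ` form a Cauchy sequence because `Ann_R (Ann_E 𝔪ⁿ) = 𝔪ⁿ`, and their
limit acts as `g` on `E = ⋃ₙ Ann_E 𝔪ⁿ`.
-/

open IsLocalRing

/-- The `q`-th Frobenius power of an ideal: the ideal generated by `q`-th powers of elements. -/
def Ideal.frobPow {R : Type*} [CommSemiring R] (q : ℕ) (I : Ideal R) : Ideal R :=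
  Ideal.span ((fun a => a ^ q) '' (I : Set R))

/-- A `q`-Frobenius map on a module `M`: additive, with `ψ (r • x) = r ^ q • ψ x`. -/
structure FrobeniusMap (R : Type*) [CommSemiring R] (M : Type*) [AddCommMonoid M]
    [Module R M] (q : ℕ) where
  toFun : M → M
  map_add' : ∀ x y, toFun (x + y) = toFun x + toFun y
  map_smul' : ∀ (r : R) (x : M), toFun (r • x) = r ^ q • toFun x

/-- `E` is an injective hull of the residue field of the local ring `R`. -/
def IsInjectiveHullOfResidueField (R : Type*) [CommRing R] [IsLocalRing R]
    (E : Type*) [AddCommGroup E] [Module R E] : Prop :=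
  Module.Injective R E ∧
    ∃ ι : ResidueField R →ₗ[R] E, Function.Injective ι ∧
      ∀ N : Submodule R E, N ≠ ⊥ → ∃ x, x ≠ 0 ∧ x ∈ N ∧ x ∈ LinearMap.range ι

/-- Regularity for a Noetherian local ring: the maximal ideal is generated by
`dim R` elements. -/
def IsRegularLocal (R : Type*) [CommRing R] [IsLocalRing R] : Prop :=
  ∃ (n : ℕ) (x : Fin n → R), maximalIdeal R = Ideal.span (Set.range x) ∧
    ringKrullDim R = n

/-- `φ` is (up to normalization) the natural Frobenius on `E = E_R(R/m)`: every `e`-th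
Frobenius map on `E` is uniquely of the form `u • φ^[e]`. -/
def IsNaturalFrobenius {R : Type*} [CommRing R] (p : ℕ) (E : Type*) [AddCommGroup E]
    [Module R E] (φ : FrobeniusMap R E p) : Prop :=
  ∀ e : ℕ, 1 ≤ e → ∀ θ : FrobeniusMap R E (p ^ e),
    ∃! u : R, ∀ x : E, θ.toFun x = u • (φ.toFun)^[e] x

/-- The annihilator of an ideal `I` inside a module `E`, as a submodule of `E`. -/
def annIn {R : Type*} [CommRing R] (I : Ideal R) (E : Type*) [AddCommGroup E]
    [Module R E] : Submodule R E where
  carrier := { x | ∀ a ∈ I, a • x = 0 }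
  add_mem' hx hy := fun a ha => by rw [smul_add, hx a ha, hy a ha, add_zero]
  zero_mem' := fun a _ => smul_zero a
  smul_mem' := fun r x hx a ha => by rw [smul_comm, hx a ha, smul_zero]

/-- `ν_e = 1 + p + ⋯ + p^{e-1}`. -/
def nuExp (p e : ℕ) : ℕ := ∑ i ∈ Finset.range e, p ^ i

universe u v

section Injective

variable {R : Type u} [Ring R] {E : Type v} [AddCommGroup E] [Module R E]
  [Small.{v} R] [Module.Injective R E]

theorem Module.Injective.exists_comp_eq_of_ker_le {M N : Type*} [AddCommGroup M] [Module R M]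
    [AddCommGroup N] [Module R N] (θ : M →ₗ[R] N) (f : M →ₗ[R] E)
    (h : LinearMap.ker θ ≤ LinearMap.ker f) : ∃ g : N →ₗ[R] E, g ∘ₗ θ = f := by
  obtain ⟨g, hg⟩ := Module.Injective.extension_property R E _ _ (LinearMap.range θ).subtype
    Subtype.val_injective ((LinearMap.ker θ).liftQ f h ∘ₗ θ.quotKerEquivRange.symm.toLinearMap)
  refine ⟨g, LinearMap.ext fun x => ?_⟩
  have := LinearMap.congr_fun hg ⟨θ x, LinearMap.mem_range_self θ x⟩
  simpa [LinearMap.quotKerEquivRange_symm_apply_image] using this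

end Injective

theorem small_of_faithfulSMul {R : Type u} {E : Type v} [SMul R E] [FaithfulSMul R E] :
    Small.{v} R :=
  small_of_injective (f := fun (r : R) (x : E) => r • x) fun _ _ h =>
    FaithfulSMul.eq_of_smul_eq_smul (congrFun h)

theorem Submodule.iInf_pow_smul_eq_bot_of_isLocalRing {R M : Type*} [CommRing R]
    [IsNoetherianRing R] [IsLocalRing R] [AddCommGroup M] [Module R M] (N : Submodule R M)
    [Module.Finite R N] {I : Ideal R} (hI : I ≠ ⊤) : ⨅ k : ℕ, I ^ k • N = ⊥ := by
  have h := congrArg (Submodule.map N.subtype) (I.iInf_pow_smul_eq_bot_of_isLocalRing (M := N) hI)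
  rw [Submodule.map_iInf _ N.injective_subtype, Submodule.map_bot] at h
  simpa only [Submodule.map_smul'', Submodule.map_subtype_top] using h

namespace IsLocalRing

variable (R : Type u) [CommRing R] [IsLocalRing R] {E : Type v} [AddCommGroup E] [Module R E]

/-- `R ∙ s ≅ R ⧸ 𝔪` is an essential submodule of `E`. -/
structure IsEssentialSocleGenerator (s : E) : Prop where
  ne_zero : s ≠ 0
  mem_annIn : s ∈ annIn (maximalIdeal R) E
  mem_of_ne_bot : ∀ N : Submodule R E, N ≠ ⊥ → s ∈ N

variable {R}

namespace IsEssentialSocleGenerator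

variable {s : E} (hs : IsEssentialSocleGenerator R s)
include hs

theorem exists_eq_smul_of_mem_socle {x : E} (hx : x ∈ annIn (maximalIdeal R) E) :
    ∃ c : R, x = c • s := by
  rcases eq_or_ne x 0 with rfl | hx0
  · exact ⟨0, (zero_smul R s).symm⟩
  obtain ⟨r, hr⟩ := Submodule.mem_span_singleton.mp
    (hs.mem_of_ne_bot _ (by simpa only [ne_eq, Submodule.span_singleton_eq_bot] using hx0))
  have hr_unit : IsUnit r := by
    by_contra hr_nonunit
    exact hs.ne_zero (hr ▸ hx r hr_nonunit)
  exact ⟨((hr_unit.unit⁻¹ : Rˣ) : R), by rw [← hr, smul_smul, IsUnit.val_inv_mul, one_smul]⟩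

theorem exists_smul_eqOn_socle (g : E →ₗ[R] E) :
    ∃ c : R, ∀ x ∈ annIn (maximalIdeal R) E, g x = c • x := by
  obtain ⟨c, hc⟩ := hs.exists_eq_smul_of_mem_socle (x := g s) fun a ha => by
    rw [← map_smul, hs.mem_annIn a ha, map_zero]
  refine ⟨c, fun x hx => ?_⟩
  obtain ⟨b, rfl⟩ := hs.exists_eq_smul_of_mem_socle hx
  rw [map_smul, hc, smul_comm]

theorem exists_mem_annIn_pow [IsNoetherianRing R] (x : E) :
    ∃ n : ℕ, x ∈ annIn (maximalIdeal R ^ n) E := by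
  by_contra! hx
  have hne (k : ℕ) : maximalIdeal R ^ k • (R ∙ x) ≠ ⊥ := fun hk => hx k fun a ha => by
    simpa [hk] using Submodule.smul_mem_smul ha (Submodule.mem_span_singleton_self x)
  have hs_mem : s ∈ ⨅ k : ℕ, maximalIdeal R ^ k • (R ∙ x) :=
    Submodule.mem_iInf _ |>.mpr fun k => hs.mem_of_ne_bot _ (hne k)
  rw [Submodule.iInf_pow_smul_eq_bot_of_isLocalRing _ (maximalIdeal.isMaximal R).ne_top] at hs_mem
  exact hs.ne_zero hs_mem

variable [Small.{v} R] [Module.Injective R E]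

theorem exists_apply_eq {Q : Type*} [AddCommGroup Q] [Module R Q] {z : Q} (hz : z ≠ 0) :
    ∃ f : Q →ₗ[R] E, f z = s := by
  obtain ⟨f, hf⟩ := Module.Injective.exists_comp_eq_of_ker_le (LinearMap.toSpanSingleton R Q z)
    (LinearMap.toSpanSingleton R E s) fun r hr => by
      have hrz : r • z = 0 := hr
      have hr_mem : r ∈ maximalIdeal R := fun hr_unit =>
        hz (hr_unit.smul_left_cancel.mp (hrz.trans (smul_zero r).symm))
      exact hs.mem_annIn r hr_mem
  exact ⟨f, by simpa using LinearMap.congr_fun hf 1⟩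

theorem exists_le_ker_apply_eq {V : Submodule R E} {x : E} (hx : x ∉ V) :
    ∃ g : E →ₗ[R] E, V ≤ LinearMap.ker g ∧ g x = s := by
  obtain ⟨f, hf⟩ := hs.exists_apply_eq (z := V.mkQ x) (by simpa using hx)
  exact ⟨f ∘ₗ V.mkQ, fun v hv => by simp [(Submodule.Quotient.mk_eq_zero V).mpr hv], hf⟩

theorem annihilator_annIn (J : Ideal R) : (annIn J E).annihilator = J := by
  refine le_antisymm (fun r hr => ?_) fun r hr => Submodule.mem_annihilator.mpr fun x hx => hx r hr
  by_contra hrJ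
  obtain ⟨f, hf⟩ := hs.exists_apply_eq (z := Ideal.Quotient.mk J r)
    (by rwa [ne_eq, Ideal.Quotient.eq_zero_iff_mem])
  have hmk (a : R) : a • (1 : R ⧸ J) = Ideal.Quotient.mk J a := by
    rw [Algebra.smul_def, mul_one, Ideal.Quotient.algebraMap_eq]
  have hf_mem : f 1 ∈ annIn J E := fun a ha => by
    rw [← map_smul, hmk, Ideal.Quotient.eq_zero_iff_mem.mpr ha, map_zero]
  have := Submodule.mem_annihilator.mp hr _ hf_mem
  rw [← map_smul, hmk, hf] at this
  exact hs.ne_zero this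

theorem exists_smul_eqOn_annIn_pow_succ [IsNoetherianRing R] {n : ℕ} (g : E →ₗ[R] E)
    (hg : ∀ x ∈ annIn (maximalIdeal R ^ n) E, g x = 0) :
    ∃ ρ : R, ∀ x ∈ annIn (maximalIdeal R ^ (n + 1)) E, g x = ρ • x := by
  obtain ⟨d, a, ha⟩ := Submodule.fg_iff_exists_fin_generating_family.mp
    (IsNoetherian.noetherian (maximalIdeal R ^ n))
  have ha_mem (i : Fin d) : a i ∈ maximalIdeal R ^ n := ha ▸ Submodule.subset_span ⟨i, rfl⟩
  set A := annIn (maximalIdeal R ^ (n + 1)) E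
  let θ : E →ₗ[R] Fin d → E := LinearMap.pi fun i => a i • LinearMap.id
  obtain ⟨h, hh⟩ := Module.Injective.exists_comp_eq_of_ker_le (θ ∘ₗ A.subtype) (g ∘ₗ A.subtype)
    fun y hy => by
      have hle : maximalIdeal R ^ n ≤ Ideal.torsionOf R E y := ha ▸ Ideal.span_le.mpr
        (Set.range_subset_iff.mpr fun i => (Ideal.mem_torsionOf_iff _ _).mpr (congrFun hy i))
      exact hg y fun b hb => (Ideal.mem_torsionOf_iff _ _).mp (hle hb)
  choose c hc using fun i => hs.exists_smul_eqOn_socle (h ∘ₗ LinearMap.single R (fun _ => E) i)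
  refine ⟨∑ i, c i * a i, fun x hx => ?_⟩
  have ha_smul_mem (i : Fin d) : a i • x ∈ annIn (maximalIdeal R) E := fun b hb => by
    rw [smul_smul]
    exact hx _ (pow_succ' (maximalIdeal R) n ▸ Ideal.mul_mem_mul hb (ha_mem i))
  calc g x = h (θ x) := (LinearMap.congr_fun hh ⟨x, hx⟩).symm
    _ = ∑ i, h (Pi.single i (a i • x)) := by rw [← Finset.univ_sum_single (θ x), map_sum]; rfl
    _ = ∑ i, (c i * a i) • x := Finset.sum_congr rfl fun i _ => by
      rw [mul_smul]
      exact hc i _ (ha_smul_mem i)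
    _ = (∑ i, c i * a i) • x := (Finset.sum_smul ..).symm

theorem exists_smul_eqOn_annIn_pow [IsNoetherianRing R] (g : E →ₗ[R] E) (n : ℕ) :
    ∃ r : R, ∀ x ∈ annIn (maximalIdeal R ^ n) E, g x = r • x := by
  induction n with
  | zero =>
    refine ⟨0, fun x hx => ?_⟩
    rw [show x = 0 by simpa using hx 1 (by simp), map_zero, smul_zero]
  | succ n ih =>
    obtain ⟨r, hr⟩ := ih
    obtain ⟨ρ, hρ⟩ := hs.exists_smul_eqOn_annIn_pow_succ (g - r • LinearMap.id)
      fun x hx => by simp [hr x hx]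
    refine ⟨r + ρ, fun x hx => ?_⟩
    rw [add_smul, ← hρ x hx]
    simp

theorem exists_forall_apply_eq_smul [IsNoetherianRing R]
    (hcomp : IsAdicComplete (maximalIdeal R) R) (g : E →ₗ[R] E) : ∃ r : R, ∀ x, g x = r • x := by
  choose f hf using hs.exists_smul_eqOn_annIn_pow g
  have hsub (m : ℕ) : (maximalIdeal R ^ m • ⊤ : Ideal R) = maximalIdeal R ^ m := by
    rw [smul_eq_mul, Ideal.mul_top]
  have hcauchy {m n : ℕ} (hmn : m ≤ n) :
      f m ≡ f n [SMOD (maximalIdeal R ^ m • ⊤ : Ideal R)] := by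
    rw [SModEq.sub_mem, hsub, ← hs.annihilator_annIn (maximalIdeal R ^ m),
      Submodule.mem_annihilator]
    intro x hx
    rw [sub_smul, ← hf m x hx, ← hf n x fun a ha => hx a (Ideal.pow_le_pow_right hmn ha), sub_self]
  obtain ⟨r, hr⟩ := hcomp.toIsPrecomplete.prec hcauchy
  refine ⟨r, fun x => ?_⟩
  obtain ⟨n, hn⟩ := hs.exists_mem_annIn_pow x
  have hfr : f n - r ∈ maximalIdeal R ^ n := by simpa only [SModEq.sub_mem, hsub] using hr n
  rw [hf n x hn, ← sub_eq_zero, ← sub_smul]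
  exact hn _ hfr

theorem annIn_annihilator [IsNoetherianRing R] (hcomp : IsAdicComplete (maximalIdeal R) R)
    (M : Submodule R E) : annIn M.annihilator E = M := by
  refine le_antisymm (fun x hx => ?_) fun x hx a ha => Submodule.mem_annihilator.mp ha x hx
  by_contra hxM
  obtain ⟨g, hgM, hgx⟩ := hs.exists_le_ker_apply_eq hxM
  obtain ⟨r, hr⟩ := hs.exists_forall_apply_eq_smul hcomp g
  have hr_mem : r ∈ M.annihilator :=
    Submodule.mem_annihilator.mpr fun y hy => by rw [← hr, hgM hy]
  exact hs.ne_zero (by rw [← hgx, hr, hx r hr_mem])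

end IsEssentialSocleGenerator

end IsLocalRing

section InjectiveHull

variable {R : Type u} [CommRing R] [IsLocalRing R] {E : Type v} [AddCommGroup E] [Module R E]

theorem IsInjectiveHullOfResidueField.exists_isEssentialSocleGenerator
    (hE : IsInjectiveHullOfResidueField R E) : ∃ s : E, IsEssentialSocleGenerator R s := by
  obtain ⟨-, ι, hι, hess⟩ := hE
  have hsmul (a : R) (w : ResidueField R) : a • ι w = ι (residue R a * w) := by
    rw [← map_smul, Algebra.smul_def, ResidueField.algebraMap_eq]
  refine ⟨ι 1, (map_ne_zero_iff ι hι).mpr one_ne_zero, fun a ha => ?_, fun N hN => ?_⟩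
  · rw [hsmul, (residue_eq_zero_iff a).mpr ha, zero_mul, map_zero]
  · obtain ⟨_, hy0, hyN, w, rfl⟩ := hess N hN
    have hw : w ≠ 0 := by rintro rfl; exact hy0 (map_zero ι)
    obtain ⟨c, hc⟩ := residue_surjective (R := R) w⁻¹
    rw [← inv_mul_cancel₀ hw, ← hc, ← hsmul]
    exact N.smul_mem c hyN

end InjectiveHull

/-- The zero map is a Frobenius map whose coefficient must be unique. -/
theorem IsNaturalFrobenius.faithfulSMul {R : Type*} [CommRing R] {p : ℕ} {E : Type*}
    [AddCommGroup E] [Module R E] {φ : FrobeniusMap R E p} (hφ : IsNaturalFrobenius p E φ) :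
    FaithfulSMul R E := by
  refine ⟨fun {r₁ r₂} h => ?_⟩
  obtain ⟨_, -, huniq⟩ := hφ 1 le_rfl
    ⟨fun _ => 0, fun _ _ => (add_zero 0).symm, fun _ _ => (smul_zero _).symm⟩
  have h₀ := huniq 0 fun x => (zero_smul R _).symm
  have h₁ := huniq (r₁ - r₂) fun x => by simp [sub_smul, h]
  exact sub_eq_zero.mp (h₁.trans h₀.symm)

theorem stmt16_general {R : Type*} [CommRing R] [IsLocalRing R] [IsNoetherianRing R]
    (p : ℕ)
    (hcomp : IsAdicComplete (maximalIdeal R) R)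
    (E : Type*) [AddCommGroup E] [Module R E]
    (hE : IsInjectiveHullOfResidueField R E)
    (φ : FrobeniusMap R E p) (hφ : IsNaturalFrobenius p E φ)
    (I : Ideal R) (u : R)
    (L : Ideal R) (hL : I ≤ L) :
    (∀ x ∈ annIn L E, u • φ.toFun x ∈ annIn L E) ↔
      ∃ M : Submodule R E, M ≤ annIn I E ∧ (∀ x ∈ M, u • φ.toFun x ∈ M) ∧
        L = M.annihilator := by
  obtain ⟨s, hs⟩ := hE.exists_isEssentialSocleGenerator
  have : FaithfulSMul R E := hφ.faithfulSMul
  have : Small R := small_of_faithfulSMul (E := E)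
  have : Module.Injective R E := hE.1
  constructor
  · exact fun hT => ⟨annIn L E, fun x hx a ha => hx a (hL ha), hT, (hs.annihilator_annIn L).symm⟩
  · rintro ⟨M, -, hM, rfl⟩
    rwa [hs.annIn_annihilator hcomp M]

/-- Assume `R` is complete and `E_S = Ann_E I` (with `T` acting as the
restriction of `u • φ`) is `T`-torsion-free.  Then an ideal `L ⊆ R` containing `I` is an
`E_S`-ideal (i.e. `Ann_{E_S} L` is `T`-stable) if and only if `L S` is an `E_S`-special
ideal, i.e. `L` is the annihilator of some `T`-stable submodule of `E_S`. -/
theorem stmt16 {R : Type*} [CommRing R] [IsLocalRing R] [IsNoetherianRing R]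
    (p : ℕ) [Fact p.Prime] [CharP R p]
    (hreg : IsRegularLocal R) (hcomp : IsAdicComplete (maximalIdeal R) R)
    (E : Type*) [AddCommGroup E] [Module R E]
    (hE : IsInjectiveHullOfResidueField R E)
    (φ : FrobeniusMap R E p) (hφ : IsNaturalFrobenius p E φ)
    (I : Ideal R) (u : R) (hu : u ∈ Submodule.colon (Ideal.frobPow p I) I)
    (htf : ∀ x ∈ annIn I E, (∃ m, (fun y => u • φ.toFun y)^[m] x = 0) → x = 0)
    (L : Ideal R) (hL : I ≤ L) :
    (∀ x ∈ annIn L E, u • φ.toFun x ∈ annIn L E) ↔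
      ∃ M : Submodule R E, M ≤ annIn I E ∧ (∀ x ∈ M, u • φ.toFun x ∈ M) ∧
        L = M.annihilator :=
  stmt16_general p hcomp E hE φ hφ I u L hL
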